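/- arXiv:math/0602320 — 2 statements merged into one kernel-verified Lean document; each statement's English description precedes it below -/
import Mathlib

section
/- Let P = X^4 + a1·X^3 + a2·X^2 + a3·X + a4 split over an algebraic closure with roots x1, x2, x3, x4, assumed such that x1 + x2 − x3 − x4 ≠ 0 (and its analogues are nonzero). Let Q be the remainder of (P')^2 modulo P. Then the three quantities (x1·x2 − x3·x4)/(x1 + x2 − x3 − x4), (x1·x3 − x2·x4)/(x1 + x3 − x2 − x4), (x1·x4 − x2·x3)/(x1 + x4 − x2 − x3) are roots of Q. -/
open Polynomial

/-- The monic quartic `X^4 + a1 X^3 + a2 X^2 + a3 X + a4`. -/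
noncomputable def quartic {k : Type*} [Field k] (a1 a2 a3 a4 : k) : k[X] :=
  X ^ 4 + C a1 * X ^ 3 + C a2 * X ^ 2 + C a3 * X + C a4

/-- Remainder of the square of the derivative of P under Euclidean division by P. -/
noncomputable def resCubic {k : Type*} [Field k] (a1 a2 a3 a4 : k) : k[X] :=
  (derivative (quartic a1 a2 a3 a4)) ^ 2 %ₘ quartic a1 a2 a3 a4

/-- Discriminant of the monic quartic `X^4 + p X^3 + q X^2 + r X + s`. -/
def quarticDisc {R : Type*} [CommRing R] (p q r s : R) : R :=
  256*s^3 - 192*p*r*s^2 - 128*q^2*s^2 + 144*p^2*q*s^2 - 27*p^4*s^2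
  + 144*q*r^2*s - 6*p^2*r^2*s - 80*p*q^2*r*s + 18*p^3*q*r*s + 16*q^4*s
  - 4*p^2*q^3*s - 27*r^4 + 18*p*q*r^3 - 4*p^3*r^3 - 4*q^3*r^2 + p^2*q^2*r^2

/-- Discriminant of the cubic `b0 X^3 + b1 X^2 + b2 X + b3`. -/
def cubicDisc {R : Type*} [CommRing R] (b0 b1 b2 b3 : R) : R :=
  b1^2*b2^2 - 4*b0*b2^3 - 4*b1^3*b3 + 18*b0*b1*b2*b3 - 27*b0^2*b3^2

lemma quartic_monic {k : Type*} [Field k] (a1 a2 a3 a4 : k) : (quartic a1 a2 a3 a4).Monic := by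
  unfold quartic
  monicity!

lemma resCubic_eq {k : Type*} [Field k] (a1 a2 a3 a4 : k) :
    resCubic a1 a2 a3 a4 =
      C (4*a1*a2 - a1^3 - 8*a3) * X^3 + C (4*a2^2 - a1^2*a2 - 2*a1*a3 - 16*a4) * X^2
      + C (4*a2*a3 - a1^2*a3 - 8*a1*a4) * X + C (a3^2 - a1^2*a4) := by
  have hm := quartic_monic a1 a2 a3 a4
  have hd : derivative (quartic a1 a2 a3 a4) =
      C 4 * X^3 + C (3*a1) * X^2 + C (2*a2) * X + C a3 := by
    unfold quartic
    simp [derivative_pow]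
    ring
  have key : (derivative (quartic a1 a2 a3 a4)) ^ 2 =
      (C 16 * X^2 + C (8*a1) * X + C (a1^2)) * quartic a1 a2 a3 a4 +
      (C (4*a1*a2 - a1^3 - 8*a3) * X^3 + C (4*a2^2 - a1^2*a2 - 2*a1*a3 - 16*a4) * X^2
      + C (4*a2*a3 - a1^2*a3 - 8*a1*a4) * X + C (a3^2 - a1^2*a4)) := by
    rw [hd]; unfold quartic
    simp only [C_add, C_mul, C_sub, C_pow, map_ofNat]
    ring
  rw [resCubic, key, add_modByMonic,
    (modByMonic_eq_zero_iff_dvd hm).2 (dvd_mul_left _ _), zero_add,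
    (modByMonic_eq_self_iff hm).2]
  have h4 : (quartic a1 a2 a3 a4).degree = 4 := by
    unfold quartic; compute_degree!
  rw [h4]
  refine lt_of_le_of_lt ?_ (by norm_num : (3 : WithBot ℕ) < 4)
  compute_degree

set_option maxHeartbeats 1600000

/-- If the quartic splits with roots x1,...,x4, the three cross-ratio type quantities
`(x1 x2 - x3 x4)/(x1 + x2 - x3 - x4)` and its analogues are roots of the resCubic `Q`. -/
theorem stmt_1 {k K : Type*} [Field k] [CharZero k] [Field K] [Algebra k K]
    (a1 a2 a3 a4 : k) (x : Fin 4 → K)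
    (hP : (quartic a1 a2 a3 a4).map (algebraMap k K) =
      (X - C (x 0)) * (X - C (x 1)) * (X - C (x 2)) * (X - C (x 3)))
    (h1 : x 0 + x 1 - x 2 - x 3 ≠ 0)
    (h2 : x 0 + x 2 - x 1 - x 3 ≠ 0)
    (h3 : x 0 + x 3 - x 1 - x 2 ≠ 0) :
    aeval ((x 0 * x 1 - x 2 * x 3) / (x 0 + x 1 - x 2 - x 3)) (resCubic a1 a2 a3 a4) = 0 ∧
    aeval ((x 0 * x 2 - x 1 * x 3) / (x 0 + x 2 - x 1 - x 3)) (resCubic a1 a2 a3 a4) = 0 ∧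
    aeval ((x 0 * x 3 - x 1 * x 2) / (x 0 + x 3 - x 1 - x 2)) (resCubic a1 a2 a3 a4) = 0 := by
  set f := algebraMap k K with hf
  have hmap : (quartic a1 a2 a3 a4).map f =
      X^4 + C (f a1) * X^3 + C (f a2) * X^2 + C (f a3) * X + C (f a4) := by
    simp [quartic]
  have hexp : (X - C (x 0)) * (X - C (x 1)) * (X - C (x 2)) * (X - C (x 3)) =
      X^4 - C (x 0 + x 1 + x 2 + x 3) * X^3
      + C (x 0*x 1 + x 0*x 2 + x 0*x 3 + x 1*x 2 + x 1*x 3 + x 2*x 3) * X^2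
      - C (x 0*x 1*x 2 + x 0*x 1*x 3 + x 0*x 2*x 3 + x 1*x 2*x 3) * X
      + C (x 0*x 1*x 2*x 3) := by
    simp only [map_add, map_mul]
    ring
  rw [hmap, hexp] at hP
  have e3 := congrArg (fun p => p.coeff 3) hP
  have e2 := congrArg (fun p => p.coeff 2) hP
  have e1 := congrArg (fun p => p.coeff 1) hP
  have e0 := congrArg (fun p => p.coeff 0) hP
  simp only [coeff_add, coeff_sub, coeff_C_mul, coeff_X_pow, coeff_C, coeff_X] at e3 e2 e1 e0
  norm_num at e3 e2 e1 e0
  have hc3 : f a1 = -(x 0 + x 1 + x 2 + x 3) := by linear_combination e3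
  have hc2 : f a2 = x 0*x 1 + x 0*x 2 + x 0*x 3 + x 1*x 2 + x 1*x 3 + x 2*x 3 := by
    linear_combination e2
  have hc1 : f a3 = -(x 0*x 1*x 2 + x 0*x 1*x 3 + x 0*x 2*x 3 + x 1*x 2*x 3) := by
    linear_combination e1
  have hc0 : f a4 = x 0*x 1*x 2*x 3 := by linear_combination e0
  refine ⟨?_, ?_, ?_⟩ <;>
  · rw [resCubic_eq]
    simp only [map_add, map_mul, map_pow, map_sub, map_ofNat, aeval_C, aeval_X, ← hf,
      hc0, hc1, hc2, hc3]
    field_simp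
    ring
end

section
/- The quartic polynomial P = X^4 − 4·X^3 + 36·V·X^2 + 2·U^2·X^2 + 4·U^2·X − 8·U^2·V·X + 36·U^2·V^2 + U^4 − 4·U^2·V, regarded as a polynomial in X over the rational function field ℚ(U,V), has discriminant equal to a nonzero square in ℚ(U,V). -/
open Polynomial

/-- The field ℚ(U,V). -/
noncomputable abbrev kUV : Type := FractionRing (MvPolynomial (Fin 2) ℚ)

/-- The indeterminate U in ℚ(U,V). -/
noncomputable def Uu : kUV := algebraMap (MvPolynomial (Fin 2) ℚ) kUV (MvPolynomial.X 0)

/-- The indeterminate V in ℚ(U,V). -/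
noncomputable def Vv : kUV := algebraMap (MvPolynomial (Fin 2) ℚ) kUV (MvPolynomial.X 1)

/-- The quartic P of Proposition 1 over ℚ(U,V). -/
noncomputable def Pspec : Polynomial kUV :=
  Polynomial.X ^ 4 - 4 * Polynomial.X ^ 3 + Polynomial.C (36 * Vv) * Polynomial.X ^ 2
    + Polynomial.C (2 * Uu ^ 2) * Polynomial.X ^ 2
    + Polynomial.C (4 * Uu ^ 2) * Polynomial.X - Polynomial.C (8 * Uu ^ 2 * Vv) * Polynomial.X
    + Polynomial.C (36 * Uu ^ 2 * Vv ^ 2 + Uu ^ 4 - 4 * Uu ^ 2 * Vv)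

section DiscRoot

variable {R : Type*} [CommRing R]

def discRoot (u v : R) : R :=
  128 * u * ((v - 1) * u ^ 4 + (27 * v ^ 3 - 27 * v ^ 2 - 9 * v + 1) * u ^ 2
    + 27 * v ^ 2 * (1 - 9 * v))

theorem quarticDisc_eq_discRoot_sq (u v : R) :
    quarticDisc (-4) (36 * v + 2 * u ^ 2) (4 * u ^ 2 - 8 * u ^ 2 * v)
      (36 * u ^ 2 * v ^ 2 + u ^ 4 - 4 * u ^ 2 * v) = discRoot u v ^ 2 := by
  rw [quarticDisc, discRoot]
  ring

theorem map_discRoot {S : Type*} [CommRing S] (f : R →+* S) (u v : R) :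
    f (discRoot u v) = discRoot (f u) (f v) := by
  simp [discRoot, map_ofNat]

end DiscRoot

theorem discRoot_X_ne_zero :
    discRoot (MvPolynomial.X 0 : MvPolynomial (Fin 2) ℚ) (MvPolynomial.X 1) ≠ 0 := by
  intro h
  have h12 := congrArg (MvPolynomial.eval ![(1 : ℚ), 2]) h
  rw [map_discRoot] at h12
  norm_num [discRoot] at h12

theorem discRoot_Uu_Vv_ne_zero : discRoot Uu Vv ≠ 0 := by
  rw [Uu, Vv, ← map_discRoot, map_ne_zero_iff _ (IsFractionRing.injective _ _)]
  exact discRoot_X_ne_zero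

/-- The discriminant of the quartic P of Proposition 1 is a nonzero square in ℚ(U,V). -/
theorem stmt_9 :
    quarticDisc (-4 : kUV) (36*Vv + 2*Uu^2) (4*Uu^2 - 8*Uu^2*Vv)
        (36*Uu^2*Vv^2 + Uu^4 - 4*Uu^2*Vv) ≠ 0 ∧
    IsSquare (quarticDisc (-4 : kUV) (36*Vv + 2*Uu^2) (4*Uu^2 - 8*Uu^2*Vv)
        (36*Uu^2*Vv^2 + Uu^4 - 4*Uu^2*Vv)) := by
  rw [quarticDisc_eq_discRoot_sq]
  exact ⟨pow_ne_zero 2 discRoot_Uu_Vv_ne_zero, discRoot Uu Vv, sq _⟩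
end
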